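/- Let c ≥ 2 be an integer, fix an integer n ≥ 2, and consider the random walk on ℤ_m for m = c^{n−1} determined by the sequence G i = c^{i−1} (i = 1, …, n). Set κ = 1/(1 − cos(π/c)). Then for every real ε > 0 and every natural number t with t ≥ κ·n·log((n−1)·(c−1)) − κ·n·log(log(4ε² + 1)), the t-step distribution p satisfies (1/2)·Σ_{x ∈ ZMod m} |p t x − π x| ≤ ε, where π is the uniform distribution. -/

import Mathlib

/-!
Fourier analysis on `ℤ_m`: the `t`-step distribution has Fourier coefficients `μ̂(k)ᵗ`, so by
Cauchy–Schwarz and Parseval `(2‖p t - π‖_TV)² ≤ ∑_{k ≠ 0} |μ̂(k)|^{2t}`. For the steps `c^j`,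
pairing consecutive terms of `μ̂(k) = n⁻¹ ∑_j e(-c^j k / m)` gives
`|μ̂(k)| ≤ 1 - n⁻¹ ∑_{j < n-1} (1 - |cos (π c^j (1 - c) k / m)|)`. Since `c` is nilpotent modulo
`m = c^{n-1}`, `k ↦ (1 - c) k` is a bijection, and the resulting sum over `k < c^{n-1}` factors
over the base-`c` digits of `k`. Among the `c` values of a digit only the extreme ones `0` and
`c - 1` can push `|cos|` towards `1`, and not both at once, so each digit contributes at most
`1 + (c - 1) e^{-t(1 - cos(π/c))/n}`; hence the sum is at most
`(1 + (c - 1) e^{-t/(κn)})^{n-1} - 1 ≤ exp ((n-1)(c-1) e^{-t/(κn)}) - 1 ≤ 4ε²`.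
-/

open Finset Real

/-- Step distribution of the random walk on `ℤ_m` with steps drawn uniformly from
`{G 1, …, G n}`. -/
noncomputable def stepDist (G : ℕ → ℕ) (n m : ℕ) [NeZero m] (x : ZMod m) : ℝ :=
  (1 / n : ℝ) * ((Finset.Icc 1 n).filter (fun i => (G i : ZMod m) = x)).card

/-- `t`-step distribution of the random walk started at `0`. -/
noncomputable def walkDist (G : ℕ → ℕ) (n m : ℕ) [NeZero m] : ℕ → ZMod m → ℝ
  | 0 => fun x => if x = 0 then 1 else 0
  | t + 1 => fun x => ∑ y : ZMod m, walkDist G n m t y * stepDist G n m (x - y)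

open scoped ZMod
open ZMod (stdAddChar)

lemma abs_cos_add_nat_mul_pi (x : ℝ) (n : ℕ) : |cos (x + n * π)| = |cos x| := by
  rw [cos_add_nat_mul_pi, abs_mul, abs_pow, abs_neg, abs_one, one_pow, one_mul]

namespace ZMod

variable {N : ℕ} [NeZero N]

lemma sum_norm_dft_sq (Φ : ZMod N → ℂ) : ∑ k, ‖𝓕 Φ k‖ ^ 2 = N * ∑ j, ‖Φ j‖ ^ 2 := by
  have hconj (k : ZMod N) :
      starRingEnd ℂ (𝓕 Φ k) = ∑ j, stdAddChar (j * k) * starRingEnd ℂ (Φ j) := by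
    simp [dft_apply, AddChar.map_neg_eq_conj]
  have hinv (j : ZMod N) : ∑ k, stdAddChar (j * k) * 𝓕 Φ k = N * Φ j := by
    have h := invDFT_apply (𝓕 Φ) j
    simp only [LinearEquiv.symm_apply_apply, smul_eq_mul] at h
    rw [h, ← mul_assoc, mul_inv_cancel₀ (by exact_mod_cast NeZero.ne N), one_mul]
    simp_rw [mul_comm j]
  apply Complex.ofReal_injective
  push_cast
  simp_rw [← Complex.mul_conj', hconj, Finset.mul_sum]
  rw [Finset.sum_comm]
  refine Finset.sum_congr rfl fun j _ ↦ ?_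
  rw [← mul_assoc, ← hinv j, Finset.sum_mul]
  exact Finset.sum_congr rfl fun k _ ↦ by ring

lemma dft_convolution (Φ Ψ : ZMod N → ℂ) (k : ZMod N) :
    𝓕 (fun x ↦ ∑ y, Φ y * Ψ (x - y)) k = 𝓕 Φ k * 𝓕 Ψ k := by
  rw [dft_apply, dft_apply, dft_apply, Finset.sum_mul_sum]
  simp only [smul_eq_mul, Finset.mul_sum]
  conv_lhs => rw [Finset.sum_comm]
  refine Finset.sum_congr rfl fun y _ ↦ Fintype.sum_equiv (Equiv.subRight y) _ _ fun x ↦ ?_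
  rw [Equiv.subRight_apply, show -(x * k) = -(y * k) + -((x - y) * k) by ring,
    AddChar.map_add_eq_mul]
  ring

lemma norm_one_add_stdAddChar (b : ZMod N) :
    ‖1 + stdAddChar b‖ = 2 * |cos (π * b.val / N)| := by
  have h : Complex.exp (Complex.I * ↑(2 * π * b.val / N + π)) = -stdAddChar b := by
    rw [stdAddChar_apply, toCircle_apply,
      show Complex.I * ↑(2 * π * b.val / N + π) = 2 * π * Complex.I * b.val / N + π * Complex.I by
        push_cast; ring,
      Complex.exp_add, Complex.exp_pi_mul_I, mul_neg_one]
  rw [show 1 + stdAddChar b = -(Complex.exp (Complex.I * ↑(2 * π * b.val / N + π)) - 1) by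
      rw [h]; ring,
    norm_neg, Complex.norm_exp_I_mul_ofReal_sub_one, norm_mul, Real.norm_eq_abs, Real.norm_eq_abs,
    abs_two, show (2 * π * b.val / N + π) / 2 = π * b.val / N + π / 2 by ring, sin_add_pi_div_two]

lemma abs_cos_pi_mul_val_natCast_div (x : ℕ) :
    |cos (π * (x : ZMod N).val / N)| = |cos (π * x / N)| := by
  have hN : (N : ℝ) ≠ 0 := by exact_mod_cast NeZero.ne N
  have hx : (x : ℝ) = (x % N : ℕ) + N * (x / N : ℕ) := by
    exact_mod_cast (Nat.mod_add_div x N).symm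
  rw [val_natCast, show π * x / N = π * (x % N : ℕ) / N + (x / N : ℕ) * π by rw [hx]; field_simp,
    abs_cos_add_nat_mul_pi]

lemma sum_eq_sum_range_natCast {M : Type*} [AddCommMonoid M] (f : ZMod N → M) :
    ∑ k, f k = ∑ v ∈ range N, f v :=
  Finset.sum_nbij' val Nat.cast (fun k _ ↦ mem_range.2 (val_lt k)) (fun _ _ ↦ mem_univ _)
    (fun k _ ↦ natCast_zmod_val k) (fun v hv ↦ val_cast_of_lt (mem_range.1 hv)) (fun k _ ↦ by simp)

end ZMod

section RandomWalk

variable (G : ℕ → ℕ) {n m : ℕ} [NeZero m]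

lemma sum_stepDist (hn : n ≠ 0) : ∑ x, stepDist G n m x = 1 := by
  simp only [stepDist, ← mul_sum]
  rw [← Nat.cast_sum, ← card_eq_sum_card_fiberwise fun i _ ↦ mem_univ (G i : ZMod m)]
  simp [hn]

lemma sum_walkDist (hn : n ≠ 0) (t : ℕ) : ∑ x, walkDist G n m t x = 1 := by
  induction t with
  | zero => simp [walkDist]
  | succ t ih =>
    simp only [walkDist.eq_2]
    rw [sum_comm]
    refine (sum_congr rfl fun y _ ↦ ?_).trans ih
    rw [← mul_sum, Fintype.sum_equiv (Equiv.subRight y) (fun x ↦ stepDist G n m (x - y)) _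
      fun _ ↦ rfl, sum_stepDist G hn, mul_one]

lemma dft_stepDist (k : ZMod m) :
    𝓕 (fun x ↦ (stepDist G n m x : ℂ)) k =
      (n : ℂ)⁻¹ * ∑ i ∈ Icc 1 n, stdAddChar (-((G i : ZMod m) * k)) := by
  have hfiber (x : ZMod m) :
      stdAddChar (-(x * k)) * #{i ∈ Icc 1 n | (G i : ZMod m) = x} =
        ∑ i ∈ Icc 1 n with (G i : ZMod m) = x, stdAddChar (-((G i : ZMod m) * k)) := by
    rw [sum_congr rfl fun i hi ↦ by rw [(mem_filter.1 hi).2], sum_const, nsmul_eq_mul, mul_comm]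
  simp only [ZMod.dft_apply, stepDist, smul_eq_mul]
  push_cast
  simp_rw [one_div, mul_left_comm _ (n : ℂ)⁻¹, ← mul_sum, hfiber]
  rw [sum_fiberwise_of_maps_to fun i _ ↦ mem_univ (G i : ZMod m)]

lemma dft_walkDist (t : ℕ) (k : ZMod m) :
    𝓕 (fun x ↦ (walkDist G n m t x : ℂ)) k = 𝓕 (fun x ↦ (stepDist G n m x : ℂ)) k ^ t := by
  induction t with
  | zero => simp [walkDist, ZMod.dft_apply, apply_ite Complex.ofReal]
  | succ t ih =>
    simp only [walkDist.eq_2]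
    push_cast
    have h := ZMod.dft_convolution (fun y ↦ (walkDist G n m t y : ℂ))
      (fun x ↦ (stepDist G n m x : ℂ)) k
    beta_reduce at h
    rw [h, ih, pow_succ]

lemma dft_walkDist_sub_uniform (hn : n ≠ 0) (t : ℕ) (k : ZMod m) :
    𝓕 (fun x ↦ ((walkDist G n m t x - 1 / m : ℝ) : ℂ)) k =
      if k = 0 then 0 else 𝓕 (fun x ↦ (stepDist G n m x : ℂ)) k ^ t := by
  have hsplit : (fun x ↦ ((walkDist G n m t x - 1 / m : ℝ) : ℂ)) =
      (fun x ↦ (walkDist G n m t x : ℂ)) - fun _ ↦ ((1 / m : ℝ) : ℂ) := by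
    ext; push_cast; rfl
  rw [hsplit, map_sub, Pi.sub_apply]
  split_ifs with hk
  · rw [hk, ZMod.dft_apply_zero, ZMod.dft_apply_zero, ← Complex.ofReal_sum, sum_walkDist G hn,
      sum_const, card_univ, ZMod.card]
    simp [NeZero.ne]
  · have hconst : 𝓕 (fun _ ↦ ((1 / m : ℝ) : ℂ)) k = 0 := by
      rw [ZMod.dft_apply, ← sum_smul]
      simp_rw [← mul_neg]
      rw [AddChar.sum_mulShift _ (ZMod.isPrimitive_stdAddChar m), if_neg (neg_ne_zero.2 hk),
        Nat.cast_zero, zero_smul]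
    rw [hconst, sub_zero, dft_walkDist]

lemma mul_sum_sq_walkDist_sub_uniform (hn : n ≠ 0) (t : ℕ) :
    m * ∑ x, (walkDist G n m t x - 1 / m) ^ 2 =
      ∑ k ∈ univ.erase 0, ‖𝓕 (fun x ↦ (stepDist G n m x : ℂ)) k‖ ^ (2 * t) := by
  have h := ZMod.sum_norm_dft_sq (fun x ↦ ((walkDist G n m t x - 1 / m : ℝ) : ℂ))
  simp only [Complex.norm_real, Real.norm_eq_abs, sq_abs] at h
  rw [← h, ← add_sum_erase _ _ (mem_univ 0), dft_walkDist_sub_uniform G hn, if_pos rfl,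
    norm_zero, zero_pow two_ne_zero, zero_add]
  refine sum_congr rfl fun k hk ↦ ?_
  rw [dft_walkDist_sub_uniform G hn, if_neg (ne_of_mem_erase hk), norm_pow, ← pow_mul, mul_comm]

end RandomWalk

lemma one_sub_cos_add_le (A B : ℝ) : 1 - cos (A + B) ≤ 2 * ((1 - cos A) + (1 - cos B)) := by
  have half (x : ℝ) : 1 - cos x = 2 * sin (x / 2) ^ 2 := by
    rw [show x = 2 * (x / 2) by ring, cos_two_mul, cos_sq']; ring_nf
  rw [half, half A, half B, add_div, sin_add]
  nlinarith [sq_nonneg (sin (A / 2) * cos (B / 2) - cos (A / 2) * sin (B / 2)),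
    sin_sq_add_cos_sq (A / 2), sin_sq_add_cos_sq (B / 2), sq_nonneg (sin (A / 2) * sin (B / 2)),
    sq_nonneg (cos (A / 2) * cos (B / 2))]

lemma abs_cos_le_cos_of_le_of_le_pi_sub {a θ : ℝ} (ha : 0 ≤ a) (h₁ : a ≤ θ) (h₂ : θ ≤ π - a) :
    |cos θ| ≤ cos a := by
  refine abs_le.2 ⟨?_, cos_le_cos_of_nonneg_of_le_pi ha (by linarith) h₁⟩
  rw [neg_le, ← cos_pi_sub]
  exact cos_le_cos_of_nonneg_of_le_pi ha (by linarith) (by linarith)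

lemma exp_neg_add_exp_neg_le {x y : ℝ} (hx : 0 ≤ x) (hy : 0 ≤ y) :
    exp (-x) + exp (-y) ≤ 1 + exp (-(x + y)) := by
  have hu : exp (-x) ≤ 1 := exp_le_one_iff.2 (by linarith)
  have hv : exp (-y) ≤ 1 := exp_le_one_iff.2 (by linarith)
  rw [neg_add, exp_add]
  nlinarith [mul_nonneg (sub_nonneg.2 hu) (sub_nonneg.2 hv)]

lemma exp_neg_mul_one_sub_cos_add_le {s : ℝ} (hs : 0 ≤ s) (A B : ℝ) :
    exp (-s * (1 - cos A)) + exp (-s * (1 - cos B)) ≤ 1 + exp (-s * (1 - cos (A + B)) / 2) := by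
  have ha := mul_nonneg hs (sub_nonneg.2 (cos_le_one A))
  have hb := mul_nonneg hs (sub_nonneg.2 (cos_le_one B))
  calc _ = exp (-(s * (1 - cos A))) + exp (-(s * (1 - cos B))) := by ring_nf
    _ ≤ _ := exp_neg_add_exp_neg_le ha hb
    _ ≤ _ := add_le_add_right (exp_le_exp.2 (by nlinarith [one_sub_cos_add_le A B])) 1

lemma Finset.sum_range_mul {M : Type*} [AddCommMonoid M] (f : ℕ → M) (a b : ℕ) :
    ∑ v ∈ range (a * b), f v = ∑ d ∈ range b, ∑ r ∈ range a, f (a * d + r) := by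
  induction b with
  | zero => simp
  | succ b ih => rw [mul_add_one, sum_range_add, ih, sum_range_succ]

lemma sum_range_exp_neg_mul_one_sub_abs_cos_le {c : ℕ} (hc : 2 ≤ c) {s τ : ℝ} (hs : 0 ≤ s)
    (hτ₀ : 0 ≤ τ) (hτ₁ : τ ≤ 1) :
    ∑ d ∈ range c, exp (-s * (1 - |cos (π * (d + τ) / c)|)) ≤
      1 + (c - 1) * exp (-s * (1 - cos (π / c)) / 2) := by
  obtain ⟨c, rfl⟩ : ∃ c', c = c' + 2 := ⟨c - 2, by omega⟩
  set C : ℝ := ((c + 2 : ℕ) : ℝ) with hC_def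
  have hC : (0 : ℝ) < C := by positivity
  have hC2 : 2 ≤ C := by simp only [hC_def]; push_cast; linarith [(c.cast_nonneg : (0 : ℝ) ≤ c)]
  set X := exp (-s * (1 - cos (π / C)) / 2)
  have hinner (i : ℕ) (hi : i < c) :
      exp (-s * (1 - |cos (π * ((i + 1 : ℕ) + τ) / C)|)) ≤ X := by
    have hi' : (i : ℝ) + 3 ≤ C := by
      simp only [hC_def]; exact_mod_cast (by omega : i + 3 ≤ c + 2)
    have hcos : |cos (π * ((i + 1 : ℕ) + τ) / C)| ≤ cos (π / C) := by
      apply abs_cos_le_cos_of_le_of_le_pi_sub (by positivity)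
      · exact div_le_div_of_nonneg_right
          (le_mul_of_one_le_right pi_pos.le (by push_cast; linarith)) hC.le
      · rw [div_le_iff₀ hC, sub_mul, div_mul_cancel₀ _ hC.ne']
        push_cast; nlinarith [pi_pos]
    exact exp_le_exp.2 (by nlinarith [cos_le_one (π / C)])
  have hedge {θ : ℝ} (h₀ : 0 ≤ θ) (h₁ : θ ≤ 1) : 0 ≤ π * θ / C ∧ π * θ / C ≤ π / 2 := by
    refine ⟨by positivity, ?_⟩
    rw [div_le_iff₀ hC]; nlinarith [pi_pos]
  obtain ⟨h₀, h₀'⟩ := hedge hτ₀ hτ₁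
  obtain ⟨h₁, h₁'⟩ := hedge (sub_nonneg.2 hτ₁) (by linarith)
  have hfirst : |cos (π * ((0 : ℕ) + τ) / C)| = cos (π * τ / C) := by
    rw [Nat.cast_zero, zero_add, abs_of_nonneg (cos_nonneg_of_mem_Icc ⟨by linarith [pi_pos], h₀'⟩)]
  have hlast : |cos (π * ((c + 1 : ℕ) + τ) / C)| = cos (π * (1 - τ) / C) := by
    rw [show π * ((c + 1 : ℕ) + τ) / C = π - π * (1 - τ) / C by
        simp only [hC_def]; push_cast; field_simp; ring,
      cos_pi_sub, abs_neg, abs_of_nonneg (cos_nonneg_of_mem_Icc ⟨by linarith [pi_pos], h₁'⟩)]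
  have hedges := exp_neg_mul_one_sub_cos_add_le hs (π * τ / C) (π * (1 - τ) / C)
  rw [show π * τ / C + π * (1 - τ) / C = π / C by field_simp; ring] at hedges
  rw [sum_range_succ, sum_range_succ', hfirst, hlast]
  have hmid := sum_le_sum fun i hi ↦ hinner i (mem_range.1 hi)
  rw [sum_const, card_range, nsmul_eq_mul] at hmid
  rw [show C - 1 = c + 1 by simp only [hC_def]; push_cast; ring]
  linarith

lemma sum_range_pow_exp_neg_mul_sum_le {c : ℕ} (hc : 2 ≤ c) {s : ℝ} (hs : 0 ≤ s) (L : ℕ) :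
    ∑ v ∈ range (c ^ L), exp (-s * ∑ j ∈ range L, (1 - |cos (π * v * c ^ j / c ^ L)|)) ≤
      (1 + (c - 1) * exp (-s * (1 - cos (π / c)) / 2)) ^ L := by
  induction L with
  | zero => simp
  | succ L ih =>
    have hc0 : (0 : ℝ) < c := by positivity
    -- `v = c ^ L * d + r` with top digit `d`: the terms `j ≥ 1` see `d` only through a
    -- multiple of `π`, the term `j = 0` sees `d + r / c ^ L`
    have hsplit (d r : ℕ) :
        ∑ j ∈ range (L + 1), (1 - |cos (π * ((c ^ L * d + r : ℕ) : ℝ) * c ^ j / c ^ (L + 1))|) =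
          ∑ j ∈ range L, (1 - |cos (π * r * c ^ j / c ^ L)|) +
            (1 - |cos (π * (d + r / c ^ L) / c)|) := by
      rw [sum_range_succ']
      congr 1
      · refine sum_congr rfl fun j _ ↦ ?_
        rw [show π * ((c ^ L * d + r : ℕ) : ℝ) * c ^ (j + 1) / c ^ (L + 1) =
            π * r * c ^ j / c ^ L + (d * c ^ j : ℕ) * π by push_cast; field_simp; ring,
          abs_cos_add_nat_mul_pi]
      · congr 3
        push_cast; field_simp; ring
    rw [pow_succ c L, sum_range_mul]
    simp_rw [hsplit, mul_add (-s), exp_add]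
    rw [sum_comm, pow_succ]
    simp_rw [← mul_sum]
    have hX : 0 ≤ 1 + (c - 1) * exp (-s * (1 - cos (π / c)) / 2) := by
      have : (1 : ℝ) ≤ c := by exact_mod_cast (by omega : 1 ≤ c)
      positivity
    refine (sum_le_sum fun r hr ↦ mul_le_mul_of_nonneg_left ?_ (exp_pos _).le).trans
      (by rw [← sum_mul]; exact mul_le_mul_of_nonneg_right ih hX)
    have hr : (r : ℝ) < c ^ L := by exact_mod_cast mem_range.1 hr
    exact sum_range_exp_neg_mul_one_sub_abs_cos_le hc hs (by positivity)
      ((div_le_one (by positivity)).2 hr.le)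

lemma two_mul_norm_sum_range_succ_le {E : Type*} [SeminormedAddCommGroup E] [NormedSpace ℝ E]
    (u : ℕ → E) (n : ℕ) :
    2 * ‖∑ j ∈ range (n + 1), u j‖ ≤ ‖u 0‖ + ‖u n‖ + ∑ j ∈ range n, ‖u j + u (j + 1)‖ := by
  have h : (2 : ℝ) • ∑ j ∈ range (n + 1), u j = u 0 + u n + ∑ j ∈ range n, (u j + u (j + 1)) := by
    rw [two_smul, sum_add_distrib]
    nth_rw 1 [sum_range_succ]
    rw [sum_range_succ']
    abel
  calc 2 * ‖∑ j ∈ range (n + 1), u j‖ = ‖(2 : ℝ) • ∑ j ∈ range (n + 1), u j‖ := by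
        rw [norm_smul, Real.norm_two]
    _ ≤ ‖u 0‖ + ‖u n‖ + ‖∑ j ∈ range n, (u j + u (j + 1))‖ := by
        rw [h]; exact (norm_add_le _ _).trans (add_le_add_left (norm_add_le _ _) _)
    _ ≤ _ := add_le_add_right (norm_sum_le _ _) _

lemma isUnit_one_sub_natCast_of_eq_pow {c m L : ℕ} (hm : m = c ^ L) :
    IsUnit (1 - (c : ZMod m)) :=
  IsNilpotent.isUnit_one_sub ⟨L, by rw [← Nat.cast_pow, ← hm, ZMod.natCast_self]⟩

section GeometricWalk

variable {c n m : ℕ} [NeZero m]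

lemma norm_dft_stepDist_geom_le (hn : n ≠ 0) (k : ZMod m) :
    ‖𝓕 (fun x ↦ (stepDist (fun i ↦ c ^ (i - 1)) n m x : ℂ)) k‖ ≤
      1 - (∑ j ∈ range (n - 1),
        (1 - |cos (π * ((c : ZMod m) ^ j * ((1 - c) * k)).val / m)|)) / n := by
  obtain ⟨n, rfl⟩ : ∃ n', n = n' + 1 := ⟨n - 1, by omega⟩
  have hpair (j : ℕ) :
      ‖stdAddChar (-((c : ZMod m) ^ j * k)) + stdAddChar (-((c : ZMod m) ^ (j + 1) * k))‖ =
        2 * |cos (π * ((c : ZMod m) ^ j * ((1 - c) * k)).val / m)| := by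
    rw [show -((c : ZMod m) ^ (j + 1) * k) =
          -((c : ZMod m) ^ j * k) + (c : ZMod m) ^ j * ((1 - c) * k) by ring,
      AddChar.map_add_eq_mul, ← mul_one_add, norm_mul, AddChar.norm_apply, one_mul,
      ZMod.norm_one_add_stdAddChar]
  have hsum := two_mul_norm_sum_range_succ_le (fun j ↦ stdAddChar (-((c : ZMod m) ^ j * k))) n
  simp only [AddChar.norm_apply, hpair, ← mul_sum] at hsum
  have hn : (0 : ℝ) < (n + 1 : ℕ) := by positivity
  rw [dft_stepDist, ← Ico_add_one_right_eq_Icc, sum_Ico_eq_sum_range, norm_mul, norm_inv,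
    Complex.norm_natCast, inv_mul_le_iff₀ hn, mul_sub, mul_one, mul_div_cancel₀ _ hn.ne']
  simp only [Nat.cast_pow, add_tsub_cancel_right, add_tsub_cancel_left, sum_sub_distrib,
    sum_const, card_range, nsmul_eq_mul, mul_one]
  push_cast
  linarith

lemma norm_dft_stepDist_geom_pow_le (hn : n ≠ 0) (t : ℕ) (k : ZMod m) :
    ‖𝓕 (fun x ↦ (stepDist (fun i ↦ c ^ (i - 1)) n m x : ℂ)) k‖ ^ (2 * t) ≤
      exp (-(2 * t / n) *
        ∑ j ∈ range (n - 1), (1 - |cos (π * ((c : ZMod m) ^ j * ((1 - c) * k)).val / m)|)) := by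
  set W := ∑ j ∈ range (n - 1), (1 - |cos (π * ((c : ZMod m) ^ j * ((1 - c) * k)).val / m)|)
  have h := norm_dft_stepDist_geom_le (c := c) hn k
  calc _ ≤ (1 - W / n) ^ (2 * t) := pow_le_pow_left₀ (norm_nonneg _) h _
    _ ≤ exp (-(W / n)) ^ (2 * t) :=
        pow_le_pow_left₀ ((norm_nonneg _).trans h) (one_sub_le_exp_neg _) _
    _ = _ := by rw [← exp_nat_mul]; push_cast; ring_nf

lemma sum_norm_dft_stepDist_geom_pow_le (hc : 2 ≤ c) (hn : n ≠ 0) (hm : m = c ^ (n - 1))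
    (t : ℕ) :
    ∑ k ∈ univ.erase 0, ‖𝓕 (fun x ↦ (stepDist (fun i ↦ c ^ (i - 1)) n m x : ℂ)) k‖ ^ (2 * t) ≤
      (1 + (c - 1) * exp (-t * (1 - cos (π / c)) / n)) ^ (n - 1) - 1 := by
  set s : ℝ := 2 * t / n
  set P : ZMod m → ℝ := fun k ↦
    exp (-s * ∑ j ∈ range (n - 1), (1 - |cos (π * ((c : ZMod m) ^ j * k).val / m)|))
  have hP0 : P 0 = 1 := by simp [P]
  have hu := isUnit_one_sub_natCast_of_eq_pow hm
  have hnat (v : ℕ) :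
      P v = exp (-s * ∑ j ∈ range (n - 1), (1 - |cos (π * v * c ^ j / c ^ (n - 1))|)) := by
    simp only [P]
    congr 2
    refine sum_congr rfl fun j _ ↦ ?_
    rw [← Nat.cast_pow, ← Nat.cast_mul, ZMod.abs_cos_pi_mul_val_natCast_div, hm]
    push_cast
    ring_nf
  calc _ ≤ ∑ k ∈ univ.erase 0, P ((1 - c) * k) :=
        sum_le_sum fun k _ ↦ norm_dft_stepDist_geom_pow_le hn t k
    _ = ∑ k, P k - 1 := by
        rw [sum_erase_eq_sub (mem_univ _), mul_zero, hP0,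
          Fintype.sum_bijective _ hu.unit.mulLeft_bijective (fun k ↦ P ((1 - c) * k)) P
            fun _ ↦ rfl]
    _ ≤ _ := by
        rw [ZMod.sum_eq_sum_range_natCast]
        simp_rw [hnat]
        rw [hm]
        gcongr
        convert sum_range_pow_exp_neg_mul_sum_le hc (s := s) (by positivity) (n - 1) using 5
        simp only [s]
        ring

end GeometricWalk

lemma cos_pi_div_lt_one {x : ℝ} (hx : 1 ≤ x) : cos (π / x) < 1 := by
  have h := cos_lt_cos_of_nonneg_of_le_pi le_rfl (div_le_self pi_pos.le hx)
    (div_pos pi_pos (by linarith))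
  rwa [cos_zero] at h

lemma mul_exp_neg_div_le_of_sub_le {κ N M L t : ℝ} (hκ : 0 < κ) (hN : 0 < N) (hM : 0 < M)
    (hL : 0 < L) (ht : κ * N * log M - κ * N * log L ≤ t) : M * exp (-t / (κ * N)) ≤ L := by
  have h : -t / (κ * N) ≤ log L - log M := by
    rw [div_le_iff₀ (by positivity)]; linarith
  calc M * exp (-t / (κ * N)) ≤ M * exp (log L - log M) := by gcongr
    _ = L := by rw [exp_sub, exp_log hL, exp_log hM]; field_simp

lemma one_add_pow_le_exp_mul {a : ℝ} (ha : -1 ≤ a) (k : ℕ) : (1 + a) ^ k ≤ exp (k * a) := by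
  rw [exp_nat_mul]
  exact pow_le_pow_left₀ (by linarith) (by linarith [add_one_le_exp a]) k

/-- Mixing-time upper bound for first order recurrences:
`t_mix(ε) ≤ κ n log((n-1)(c-1)) - κ n log(log(4ε²+1))` with `κ = 1/(1 - cos(π/c))`. -/
theorem mixing_time_upper_bound_geometric
    (c : ℕ) (hc : 2 ≤ c) (n : ℕ) (hn : 2 ≤ n)
    (m : ℕ) [NeZero m] (hm : m = c ^ (n - 1))
    (κ : ℝ) (hκ : κ = 1 / (1 - Real.cos (π / c)))
    (ε : ℝ) (hε : 0 < ε) (t : ℕ)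
    (ht : κ * n * Real.log (((n : ℝ) - 1) * ((c : ℝ) - 1))
        - κ * n * Real.log (Real.log (4 * ε ^ 2 + 1)) ≤ t) :
    (1 / 2 : ℝ) * ∑ x : ZMod m,
        |walkDist (fun i => c ^ (i - 1)) n m t x - 1 / m| ≤ ε := by
  have hc' : (2 : ℝ) ≤ c := by exact_mod_cast hc
  have hn' : (2 : ℝ) ≤ n := by exact_mod_cast hn
  have hδ : 0 < 1 - cos (π / c) := sub_pos.2 (cos_pi_div_lt_one (by linarith))
  set X := exp (-t * (1 - cos (π / c)) / n)
  have hX : ((n - 1 : ℕ) : ℝ) * ((c - 1) * X) ≤ log (4 * ε ^ 2 + 1) := by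
    have h := mul_exp_neg_div_le_of_sub_le (by rw [hκ]; positivity) (by positivity)
      (by nlinarith) (log_pos (by nlinarith)) ht
    convert h using 1
    rw [hκ, Nat.cast_sub (by omega)]
    simp only [X]; field_simp; push_cast; ring
  have hspectral := calc
    ∑ k ∈ univ.erase 0, ‖𝓕 (fun x ↦ (stepDist (fun i ↦ c ^ (i - 1)) n m x : ℂ)) k‖ ^ (2 * t)
      ≤ (1 + (c - 1) * X) ^ (n - 1) - 1 := sum_norm_dft_stepDist_geom_pow_le hc (by omega) hm t
    _ ≤ exp (log (4 * ε ^ 2 + 1)) - 1 := by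
        gcongr
        exact (one_add_pow_le_exp_mul (by nlinarith [exp_pos (-t * (1 - cos (π / c)) / n)]) _).trans
          (exp_le_exp.2 hX)
    _ = 4 * ε ^ 2 := by rw [exp_log (by positivity)]; ring
  have hCS := sq_sum_le_card_mul_sum_sq (s := univ)
    (f := fun x ↦ |walkDist (fun i ↦ c ^ (i - 1)) n m t x - 1 / m|)
  simp only [sq_abs, card_univ, ZMod.card] at hCS
  rw [mul_sum_sq_walkDist_sub_uniform _ (by omega)] at hCS
  nlinarith [sum_nonneg fun x (_ : x ∈ univ) ↦
    abs_nonneg (walkDist (fun i ↦ c ^ (i - 1)) n m t x - 1 / m)]
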